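/- There exists a simple set Z of nonempty words over the alphabet {a,b} such that for every k, Z contains at most k words of length ≤ k+4; consequently the upward closure Z̄ = {u : u contains some word of Z as a subword} is coinfinite, and the unidimensional ceer R_{Z̄} is dark. -/

import Mathlib

/-- A relation on ℕ is c.e. -/
def CeRel (R : ℕ → ℕ → Prop) : Prop := REPred fun p : ℕ × ℕ => R p.1 p.2

/-- A ceer: a c.e. equivalence relation on ℕ. -/
def Ceer (R : ℕ → ℕ → Prop) : Prop := Equivalence R ∧ CeRel R

/-- Computable reducibility of equivalence relations on ℕ. -/
def Reduces (R S : ℕ → ℕ → Prop) : Prop :=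
  ∃ f : ℕ → ℕ, Computable f ∧ ∀ x y, R x y ↔ S (f x) (f y)

/-- A transversal: a set of pairwise inequivalent numbers. -/
def IsTransversal (R : ℕ → ℕ → Prop) (T : Set ℕ) : Prop :=
  ∀ x ∈ T, ∀ y ∈ T, x ≠ y → ¬ R x y

/-- The principal transversal: least elements of equivalence classes. -/
def principalTransversal (R : ℕ → ℕ → Prop) : Set ℕ := {x | ∀ y < x, ¬ R y x}

/-- R has infinitely many equivalence classes. -/
def InfiniteClasses (R : ℕ → ℕ → Prop) : Prop :=
  {s : Set ℕ | ∃ x, s = {y | R x y}}.Infinite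

/-- A set is hyperimmune iff it is infinite and no computable function majorizes
its principal function (Kuznecov–Medvedev–Uspenskii characterization). -/
def Hyperimmune (A : Set ℕ) : Prop :=
  A.Infinite ∧ ¬ ∃ g : ℕ → ℕ, Computable g ∧ ∀ n, Nat.nth (· ∈ A) n ≤ g n

/-- A ceer is hyperdark if it has infinitely many classes and
all its infinite transversals are hyperimmune. -/
def Hyperdark (R : ℕ → ℕ → Prop) : Prop :=
  Ceer R ∧ InfiniteClasses R ∧
    ∀ T : Set ℕ, IsTransversal R T → T.Infinite → Hyperimmune T

/-- The free semigroup on the two generators a, b, realized as nonempty words: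
a first letter together with the list of remaining letters
(`false` codes a, `true` codes b). -/
abbrev Word : Type := Bool × List Bool

instance : Mul Word := ⟨fun u v => (u.1, u.2 ++ v.1 :: v.2)⟩

instance : Semigroup Word :=
  { mul_assoc := by intro a b c; simp [HMul.hMul, Mul.mul] }

/-- The underlying list of letters of a word. -/
def wlist (u : Word) : List Bool := u.1 :: u.2

/-- `Subword y x`: y occurs as a (contiguous) subword of x. -/
def Subword (y x : Word) : Prop :=
  ∃ p s : List Bool, wlist x = p ++ wlist y ++ s

/-- The coding word a b^i a. -/
def abia (i : ℕ) : Word := (false, List.replicate i true ++ [false])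

/-- Words of the set C: coding words a b^i a, i ≠ 0. -/
def isCoding (u : Word) : Prop := ∃ i : ℕ, i ≠ 0 ∧ u = abia i

/-- Words of C₊ : words which properly contain a coding word as a subword. -/
def inCplus (u : Word) : Prop :=
  ¬ isCoding u ∧ ∃ i : ℕ, i ≠ 0 ∧ Subword (abia i) u

/-- Computable reducibility between equivalence relations on coded types. -/
def ReducesT {α β : Type} [Primcodable α] [Primcodable β]
    (R : α → α → Prop) (S : β → β → Prop) : Prop :=
  ∃ f : α → β, Computable f ∧ ∀ x y, R x y ↔ S (f x) (f y)

/-- The uniform join of two equivalence relations on ℕ (evens code the first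
relation, odds the second). -/
def rjoin (R S : ℕ → ℕ → Prop) : ℕ → ℕ → Prop := fun x y =>
  (∃ a b, x = 2 * a ∧ y = 2 * b ∧ R a b) ∨
  (∃ a b, x = 2 * a + 1 ∧ y = 2 * b + 1 ∧ S a b)

/-- The defining relations of the semigroup S(R). -/
def baseRel (R : ℕ → ℕ → Prop) : Word → Word → Prop := fun u v =>
  (∃ i j, R i j ∧ u = abia (i + 1) ∧ v = abia (j + 1)) ∨ (inCplus u ∧ inCplus v)

/-- The word problem of S(R): the semigroup congruence generated by the
defining relations. -/
def wordProblemS (R : ℕ → ℕ → Prop) : Word → Word → Prop :=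
  fun u v => conGen (baseRel R) u v

/-- A c.e. set of words is simple if its complement is infinite and meets
every infinite c.e. set. -/
def SimpleSetW (Z : Set Word) : Prop :=
  REPred (· ∈ Z) ∧ Zᶜ.Infinite ∧
    ∀ Y : Set Word, REPred (· ∈ Y) → Y.Infinite → (Y ∩ Z).Nonempty

/-- The unidimensional equivalence relation determined by a set of words. -/
def uniRel (X : Set Word) : Word → Word → Prop :=
  fun u v => u = v ∨ (u ∈ X ∧ v ∈ X)

/-- A transversal of a relation on words. -/
def IsTransversalW (R : Word → Word → Prop) (T : Set Word) : Prop :=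
  ∀ x ∈ T, ∀ y ∈ T, x ≠ y → ¬ R x y

/-- Infinitely many equivalence classes, for a relation on words. -/
def InfiniteClassesW (R : Word → Word → Prop) : Prop :=
  {s : Set Word | ∃ x, s = {y | R x y}}.Infinite

/-- Darkness: infinitely many classes and no infinite c.e. transversal. -/
def DarkW (R : Word → Word → Prop) : Prop :=
  InfiniteClassesW R ∧
    ∀ T : Set Word, REPred (· ∈ T) → IsTransversalW R T → T.Finite

/-!
Post's construction with a length threshold: from the `e`-th c.e. set of words pick the first
enumerated word of length at least `2e + 5`. The resulting set `Z` meets every infinite c.e. set,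
and, having at most one word per index `e`, its weight `∑_{z ∈ Z} (2/3)^|z|` is at most
`(2/3)^5 · 9/5 < 1/3`.

If a set `F` of binary words has weight at most `1/3`, the number `a n` of words of length `n`
avoiding `F` grows by a factor `3/2` at each step: of the `2 · a n` one-letter extensions of
avoiders, each failing one ends with some `z ∈ F` and is determined by `z` and an avoider of
length `n + 1 - |z|`, while inductively `a (n + 1 - |z|) ≤ (2/3)^(|z| - 1) · a n`. So arbitrarily
long words avoid `Z`, the upward closure `Z̄` is coinfinite, and an infinite c.e. transversal of
`R_Z̄` would meet the simple set `Z ⊆ Z̄` in two distinct points.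
-/

open Nat.Partrec (Code)
open Nat.Partrec.Code Encodable Denumerable

section Enumerability

variable {α : Type*} [Primcodable α]

theorem REPred.exists_code {p : α → Prop} (hp : REPred p) :
    ∃ c : Code, ∀ a, p a ↔ (eval c (encode a)).Dom := by
  obtain ⟨c, hc⟩ := Nat.Partrec.Code.exists_code.1 hp
  exact ⟨c, fun a => by simp [hc, Part.assert]⟩

theorem REPred.exists_nat {q : α → ℕ → Prop} (hq : PrimrecRel q) :
    REPred fun a => ∃ n, q a n := by
  obtain ⟨_, hq⟩ := hq
  have : Partrec₂ fun a n =>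
      (Part.some (decide ((fun p : α × ℕ => q p.1 p.2) (a, n))) : Part Bool) :=
    hq.to_comp.partrec
  refine (Partrec.rfind this).dom_re.of_eq fun a => ?_
  exact ⟨fun ⟨n, hn, _⟩ => ⟨n, by simpa using hn⟩,
    fun ⟨n, hn⟩ => ⟨n, by simpa using hn, by simp⟩⟩

theorem REPred.and_computablePred {p q : α → Prop} (hp : REPred p) (hq : ComputablePred q) :
    REPred fun a => p a ∧ q a := by
  obtain ⟨_, hq⟩ := hq
  have : Partrec fun a => (Part.assert (p a) fun _ => Part.some ()).bind
      fun _ => cond (decide (q a)) (Part.some ()) Part.none :=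
    hp.bind (Partrec.cond (hq.comp Computable.fst) (Partrec.const' _) Partrec.none).to₂
  refine this.dom_re.of_eq fun a => ?_
  by_cases h : q a <;> simp [h, Part.assert]

end Enumerability

namespace PostSelection

variable {α : Type*} [Primcodable α] (P : ℕ → α → Bool)

def W (e : ℕ) : Set α := {a | (eval (ofNat Code e) (encode a)).Dom}

/-- Stage `t` of the search in `W e`: run `t.unpair.1` steps on the element coded by
`t.unpair.2`. -/
def found (e t : ℕ) : Bool :=
  (decode (α := α) t.unpair.2).elim false
    fun a => (evaln t.unpair.1 (ofNat Code e) (encode a)).isSome && P e a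

open Classical in
/-- Post's choice: the element of `W e` with `P e` that appears at the earliest stage. -/
noncomputable def select (e : ℕ) : Option α :=
  if h : ∃ t, found P e t then decode (Nat.find h).unpair.2 else none

noncomputable def postSet : Set α := {a | ∃ e, select P e = some a}

variable {P}

theorem found_iff {e t : ℕ} : found P e t ↔ ∃ a : α, decode t.unpair.2 = some a ∧
    (evaln t.unpair.1 (ofNat Code e) (encode a)).isSome ∧ P e a := by
  unfold found
  cases decode (α := α) t.unpair.2 <;> simp

theorem select_spec {e : ℕ} {a : α} (h : select P e = some a) : a ∈ W e ∧ P e a := by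
  unfold select at h
  split_ifs at h with hex
  obtain ⟨b, hb, hsome, hP⟩ := found_iff.1 (Nat.find_spec hex)
  obtain rfl : b = a := Option.some.inj (hb.symm.trans h)
  obtain ⟨x, hx⟩ := Option.isSome_iff_exists.1 hsome
  exact ⟨Part.dom_iff_mem.2 ⟨x, evaln_sound hx⟩, hP⟩

theorem exists_select_of_mem {e : ℕ} {a : α} (ha : a ∈ W e) (hP : P e a) :
    ∃ b, select P e = some b := by
  obtain ⟨x, hx⟩ := Part.dom_iff_mem.1 ha
  obtain ⟨k, hk⟩ := evaln_complete.1 hx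
  have hex : ∃ t, found P e t :=
    ⟨Nat.pair k (encode a), found_iff.2
      ⟨a, by simp, by simpa using Option.isSome_iff_exists.2 ⟨x, hk⟩, hP⟩⟩
  obtain ⟨b, hb, -⟩ := found_iff.1 (Nat.find_spec hex)
  exact ⟨b, by simp [select, hex, hb]⟩

theorem postSet_inter_nonempty {Y : Set α} (hY : REPred (· ∈ Y))
    (hP : ∀ e, ∃ a ∈ Y, P e a) : (Y ∩ postSet P).Nonempty := by
  obtain ⟨c, hc⟩ := hY.exists_code
  have hW : W (encode c) = Y := by ext a; simp [W, hc]
  obtain ⟨a, haY, ha⟩ := hP (encode c)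
  obtain ⟨b, hb⟩ := exists_select_of_mem (hW ▸ haY) ha
  exact ⟨b, hW ▸ (select_spec hb).1, _, hb⟩

theorem mem_postSet_iff_exists_first_stage {a : α} :
    a ∈ postSet P ↔ ∃ n : ℕ,
      (found P n.unpair.1 n.unpair.2 ∧ ∀ s < n.unpair.2, found P n.unpair.1 s = false) ∧
        decode n.unpair.2.unpair.2 = some a := by
  constructor
  · rintro ⟨e, he⟩
    unfold select at he
    split_ifs at he with hex
    refine ⟨Nat.pair e (Nat.find hex), ?_, by simpa using he⟩
    simp only [Nat.unpair_pair]
    exact ⟨Nat.find_spec hex, fun s hs => by simpa using Nat.find_min hex hs⟩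
  · rintro ⟨n, ⟨hfound, hmin⟩, ha⟩
    have hex : ∃ t, found P n.unpair.1 t := ⟨_, hfound⟩
    have : Nat.find hex = n.unpair.2 :=
      (Nat.find_eq_iff hex).2 ⟨hfound, fun s hs => by simp [hmin s hs]⟩
    exact ⟨n.unpair.1, by simp [select, hex, this, ha]⟩

theorem primrec₂_found (hP : Primrec₂ P) : Primrec₂ (found P) := by
  have hstep : Primrec fun p : ℕ × ℕ => p.2.unpair.1 :=
    Primrec.fst.comp (Primrec.unpair.comp Primrec.snd)
  have helt : Primrec fun p : ℕ × ℕ => p.2.unpair.2 :=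
    Primrec.snd.comp (Primrec.unpair.comp Primrec.snd)
  have hhalt : Primrec₂ fun (p : ℕ × ℕ) (a : α) =>
      (evaln p.2.unpair.1 (ofNat Code p.1) (encode a)).isSome :=
    Primrec.option_isSome.comp <| primrec_evaln.comp <|
      ((hstep.comp Primrec.fst).pair
        ((Primrec.ofNat Code).comp (Primrec.fst.comp Primrec.fst))).pair
          (Primrec.encode.comp Primrec.snd)
  refine (Primrec.option_casesOn (Primrec.decode.comp helt) (Primrec.const false)
    (Primrec.and.comp hhalt (hP.comp (Primrec.fst.comp Primrec.fst) Primrec.snd)).to₂).of_eq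
    fun p => ?_
  simp only [found]
  cases decode (α := α) p.2.unpair.2 <;> rfl

theorem postSet_re (hP : Primrec₂ P) : REPred (· ∈ postSet P) := by
  have hf := primrec₂_found hP
  have h1 : Primrec fun n : ℕ => n.unpair.1 := Primrec.fst.comp Primrec.unpair
  have h2 : Primrec fun n : ℕ => n.unpair.2 := Primrec.snd.comp Primrec.unpair
  have hfound : PrimrecPred fun n : ℕ => found P n.unpair.1 n.unpair.2 = true :=
    Primrec.eq.comp (hf.comp h1 h2) (Primrec.const true)
  have hmin : PrimrecPred fun n : ℕ => ∀ s < n.unpair.2, found P n.unpair.1 s = false :=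
    have hR : PrimrecRel fun s m : ℕ => found P m s = false :=
      Primrec.eq.comp (hf.comp Primrec.snd Primrec.fst) (Primrec.const false)
    hR.forall_lt.comp h2 h1
  have hdec : PrimrecRel fun (a : α) (n : ℕ) => decode n.unpair.2.unpair.2 = some a :=
    Primrec.eq.comp (Primrec.decode.comp (h2.comp (h2.comp Primrec.snd)))
      (Primrec.option_some.comp Primrec.fst)
  have hstage : PrimrecRel fun (a : α) (n : ℕ) => (found P n.unpair.1 n.unpair.2 ∧
      ∀ s < n.unpair.2, found P n.unpair.1 s = false) ∧ decode n.unpair.2.unpair.2 = some a :=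
    ((hfound.and hmin).comp Primrec.snd).and hdec
  exact (REPred.exists_nat hstage).of_eq fun a => mem_postSet_iff_exists_first_stage.symm

end PostSelection

section Avoidance

open Finset

def SmallWeight (F : Set (List Bool)) : Prop :=
  ∀ s : Finset (List Bool), ↑s ⊆ F → ∑ z ∈ s, (2 / 3 : ℝ) ^ z.length ≤ 1 / 3

def Avoids (F : Set (List Bool)) (l : List Bool) : Prop := ∀ z ∈ F, ¬ z <:+: l

variable {F : Set (List Bool)}

theorem Avoids.mono_infix {l l' : List Bool} (h : Avoids F l) (hl : l' <:+: l) : Avoids F l' :=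
  fun z hz hzl => h z hz (hzl.trans hl)

variable (F) in
open Classical in
noncomputable def avoiders (n : ℕ) : Finset (List Bool) :=
  (List.finite_length_eq Bool n).toFinset.filter (Avoids F)

theorem mem_avoiders {n : ℕ} {l : List Bool} :
    l ∈ avoiders F n ↔ l.length = n ∧ Avoids F l := by
  simp [avoiders]

theorem smallWeight_of_injOn (idx : List Bool → ℕ) (hinj : Set.InjOn idx F)
    (hlen : ∀ z ∈ F, 2 * idx z + 5 ≤ z.length) : SmallWeight F := by
  intro s hs
  have hgeom :
      HasSum (fun e : ℕ => (2 / 3 : ℝ) ^ 5 * (4 / 9) ^ e) ((2 / 3) ^ 5 * (1 - 4 / 9)⁻¹) :=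
    (hasSum_geometric_of_lt_one (by norm_num) (by norm_num)).mul_left _
  calc ∑ z ∈ s, (2 / 3 : ℝ) ^ z.length
      ≤ ∑ z ∈ s, (2 / 3 : ℝ) ^ 5 * (4 / 9) ^ idx z := sum_le_sum fun z hz => by
        calc (2 / 3 : ℝ) ^ z.length ≤ (2 / 3) ^ (2 * idx z + 5) :=
              pow_le_pow_of_le_one (by norm_num) (by norm_num) (hlen z (hs hz))
          _ = (2 / 3) ^ 5 * (4 / 9) ^ idx z := by rw [pow_add, pow_mul]; ring
    _ = ∑ e ∈ s.image idx, (2 / 3 : ℝ) ^ 5 * (4 / 9) ^ e :=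
        (sum_image (f := fun e => (2 / 3 : ℝ) ^ 5 * (4 / 9) ^ e)
          fun z hz z' hz' h => hinj (hs hz) (hs hz') h).symm
    _ ≤ (2 / 3) ^ 5 * (1 - 4 / 9)⁻¹ := hgeom.summable.sum_le_tsum _ (fun _ _ => by positivity)
        |>.trans_eq hgeom.tsum_eq
    _ ≤ 1 / 3 := by norm_num

theorem SmallWeight.nil_notMem (hF : SmallWeight F) : [] ∉ F := by
  intro h
  have := hF {[]} (by simpa using h)
  norm_num at this

theorem SmallWeight.avoiders_zero (hF : SmallWeight F) : avoiders F 0 = {[]} := by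
  ext l
  simp only [mem_avoiders, mem_singleton, List.length_eq_zero_iff, and_iff_left_iff_imp]
  rintro rfl z hz hzl
  exact hF.nil_notMem (List.eq_nil_of_infix_nil hzl ▸ hz)

/-- A one-letter extension of an avoider that meets `F` does so in a suffix `z ∈ F`, and the part
before `z` is again an avoider. -/
theorem Avoids.concat_or_exists_suffix {w : List Bool} (hw : Avoids F w) (c : Bool) :
    Avoids F (w ++ [c]) ∨ ∃ z ∈ F, ∃ p, Avoids F p ∧ p ++ z = w ++ [c] := by
  by_cases hwc : Avoids F (w ++ [c])
  · exact Or.inl hwc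
  simp only [Avoids, not_forall, not_not] at hwc
  obtain ⟨z, hzF, hz⟩ := hwc
  rcases List.infix_concat_iff.1 hz with hsuf | hinf
  · rcases List.suffix_concat_iff.1 hsuf with rfl | ⟨t, rfl, p, rfl⟩
    · exact absurd List.nil_infix (hw [] hzF)
    exact Or.inr ⟨t ++ [c], hzF, p, hw.mono_infix (List.prefix_append p t).isInfix, by simp⟩
  · exact absurd hinf (hw z hzF)

theorem two_mul_card_avoiders_le (n : ℕ) (Fn : Finset (List Bool))
    (hFn : ∀ z ∈ F, z.length ≤ n + 1 → z ∈ Fn) :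
    2 * #(avoiders F n) ≤
      #(avoiders F (n + 1)) + ∑ z ∈ Fn, #(avoiders F (n + 1 - z.length)) := by
  classical
  set E := (avoiders F n ×ˢ (univ : Finset Bool)).image fun p => p.1 ++ [p.2]
  have hE : #E = 2 * #(avoiders F n) := by
    rw [card_image_of_injective _ fun p q h => ?_, card_product, card_univ, Fintype.card_bool,
      mul_comm]
    obtain ⟨h1, h2⟩ := List.append_inj' h rfl
    exact Prod.ext h1 (List.singleton_inj.1 h2)
  have hcover : E ⊆ avoiders F (n + 1) ∪
      Fn.biUnion fun z => (avoiders F (n + 1 - z.length)).image (· ++ z) := by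
    simp only [E, subset_iff, mem_image, mem_product, mem_union, mem_biUnion]
    rintro _ ⟨⟨w, c⟩, ⟨hw, -⟩, rfl⟩
    obtain ⟨hwlen, hwF⟩ := mem_avoiders.1 hw
    rcases hwF.concat_or_exists_suffix c with hwc | ⟨z, hzF, p, hp, hpz⟩
    · exact Or.inl (mem_avoiders.2 ⟨by simp [hwlen], hwc⟩)
    have hlen := congrArg List.length hpz
    simp only [List.length_append, List.length_singleton, hwlen] at hlen
    exact Or.inr ⟨z, hFn z hzF (by omega), p, mem_avoiders.2 ⟨by omega, hp⟩, hpz⟩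
  calc 2 * #(avoiders F n) = #E := hE.symm
    _ ≤ _ := card_le_card hcover
    _ ≤ _ := card_union_le _ _
    _ ≤ _ := Nat.add_le_add_left (card_biUnion_le.trans (sum_le_sum fun _ _ => card_image_le)) _

theorem SmallWeight.three_mul_card_avoiders_le (hF : SmallWeight F) (n : ℕ)
    (hgeom : ∀ m ≤ n, (#(avoiders F m) : ℝ) ≤ (2 / 3) ^ (n - m) * #(avoiders F n)) :
    (3 : ℝ) * #(avoiders F n) ≤ 2 * #(avoiders F (n + 1)) := by
  have hfin : {z | z ∈ F ∧ z.length ≤ n + 1}.Finite :=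
    (List.finite_length_le Bool (n + 1)).subset fun z hz => hz.2
  set Fn := hfin.toFinset
  have hcount := two_mul_card_avoiders_le n Fn fun z hz hlen => hfin.mem_toFinset.2 ⟨hz, hlen⟩
  have hweight := hF Fn fun z hz => (hfin.mem_toFinset.1 hz).1
  have hterm : ∀ z ∈ Fn, (#(avoiders F (n + 1 - z.length)) : ℝ) ≤
      3 / 2 * #(avoiders F n) * (2 / 3) ^ z.length := by
    intro z hz
    obtain ⟨hzF, hzlen⟩ := hfin.mem_toFinset.1 hz
    have hpos : 0 < z.length := List.length_pos_iff.2 fun h => hF.nil_notMem (h ▸ hzF)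
    have hexp : n - (n + 1 - z.length) = z.length - 1 := by omega
    calc (#(avoiders F (n + 1 - z.length)) : ℝ)
        ≤ (2 / 3) ^ (z.length - 1) * #(avoiders F n) := hexp ▸ hgeom _ (by omega)
      _ = 3 / 2 * #(avoiders F n) * (2 / 3) ^ z.length := by
        rw [← Nat.sub_add_cancel hpos, pow_succ, Nat.add_sub_cancel]; ring
  have hbad : (∑ z ∈ Fn, (#(avoiders F (n + 1 - z.length)) : ℝ)) ≤ #(avoiders F n) / 2 :=
    calc _ ≤ ∑ z ∈ Fn, 3 / 2 * (#(avoiders F n) : ℝ) * (2 / 3) ^ z.length :=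
          sum_le_sum hterm
      _ = 3 / 2 * #(avoiders F n) * ∑ z ∈ Fn, (2 / 3 : ℝ) ^ z.length := by rw [mul_sum]
      _ ≤ 3 / 2 * #(avoiders F n) * (1 / 3) := by gcongr
      _ = #(avoiders F n) / 2 := by ring
  have : (2 * #(avoiders F n) : ℝ) ≤ #(avoiders F (n + 1)) +
      ∑ z ∈ Fn, (#(avoiders F (n + 1 - z.length)) : ℝ) := by exact_mod_cast hcount
  linarith

theorem SmallWeight.card_avoiders_le (hF : SmallWeight F) (n : ℕ) :
    ∀ m ≤ n, (#(avoiders F m) : ℝ) ≤ (2 / 3) ^ (n - m) * #(avoiders F n) := by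
  induction n with
  | zero => intro m hm; simp [Nat.le_zero.1 hm]
  | succ n ih =>
    intro m hm
    rcases Nat.of_le_succ hm with hm | rfl
    · have hstep := hF.three_mul_card_avoiders_le n ih
      calc (#(avoiders F m) : ℝ) ≤ (2 / 3) ^ (n - m) * #(avoiders F n) := ih m hm
        _ ≤ (2 / 3) ^ (n - m) * (2 / 3 * #(avoiders F (n + 1))) := by gcongr; linarith
        _ = (2 / 3) ^ (n + 1 - m) * #(avoiders F (n + 1)) := by
          rw [Nat.sub_add_comm hm, pow_succ]; ring
    · simp

theorem SmallWeight.exists_avoids (hF : SmallWeight F) (n : ℕ) :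
    ∃ l : List Bool, l.length = n ∧ Avoids F l := by
  have h := hF.card_avoiders_le n 0 n.zero_le
  rw [hF.avoiders_zero, card_singleton] at h
  obtain ⟨l, hl⟩ := nonempty_iff_ne_empty.2 fun h0 : avoiders F n = ∅ => by norm_num [h0] at h
  exact ⟨l, mem_avoiders.1 hl⟩

end Avoidance

section Words

open PostSelection

theorem wlist_injective : Function.Injective wlist := fun _ _ h => by
  simpa [wlist, Prod.ext_iff] using h

theorem subword_iff_infix {y x : Word} : Subword y x ↔ wlist y <:+: wlist x :=
  ⟨fun ⟨p, s, h⟩ => ⟨p, s, h.symm⟩, fun ⟨p, s, h⟩ => ⟨p, s, h.symm⟩⟩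

theorem Set.Infinite.exists_le_length_wlist {Y : Set Word} (hY : Y.Infinite) (L : ℕ) :
    ∃ w ∈ Y, L ≤ (wlist w).length := by
  by_contra! h
  exact hY (((List.finite_length_le Bool L).preimage wlist_injective.injOn).subset
    fun w hw => (h w hw).le)

def longFor (e : ℕ) (w : Word) : Bool := decide (2 * e + 5 ≤ (wlist w).length)

noncomputable def postWords : Set Word := postSet longFor

theorem postWords_re : REPred (· ∈ postWords) := by
  refine postSet_re (Primrec.nat_le.comp ?_ ?_).decide
  · exact Primrec.nat_add.comp (Primrec.nat_mul.comp (Primrec.const 2) Primrec.fst)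
      (Primrec.const 5)
  · exact Primrec.succ.comp (Primrec.list_length.comp (Primrec.snd.comp Primrec.snd))

theorem postWords_inter_nonempty {Y : Set Word} (hY : REPred (· ∈ Y)) (hinf : Y.Infinite) :
    (Y ∩ postWords).Nonempty :=
  postSet_inter_nonempty hY fun e => by
    simpa [longFor] using hinf.exists_le_length_wlist (2 * e + 5)

theorem le_length_of_select_longFor {e : ℕ} {w : Word} (h : select longFor e = some w) :
    2 * e + 5 ≤ (wlist w).length := by
  simpa [longFor] using (select_spec h).2

theorem postWords_length_le_finite_and_ncard_le (k : ℕ) :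
    {u ∈ postWords | (wlist u).length ≤ k + 4}.Finite ∧
      {u ∈ postWords | (wlist u).length ≤ k + 4}.ncard ≤ k := by
  have hsub : {u ∈ postWords | (wlist u).length ≤ k + 4} ⊆
      (fun e => (select longFor e).getD default) '' Set.Iio k := by
    rintro u ⟨⟨e, he⟩, hlen⟩
    have := le_length_of_select_longFor he
    exact ⟨e, by simp only [Set.mem_Iio]; omega, by simp [he]⟩
  have hfin := (Set.finite_Iio k).image fun e => (select longFor e).getD default
  refine ⟨hfin.subset hsub, ?_⟩
  calc _ ≤ _ := Set.ncard_le_ncard hsub hfin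
    _ ≤ (Set.Iio k).ncard := Set.ncard_image_le (Set.finite_Iio k)
    _ = k := Set.ncard_Iio_nat k

theorem smallWeight_postWords : SmallWeight (wlist '' postWords) := by
  have hidx : ∀ z ∈ wlist '' postWords, ∃ e w, select longFor e = some w ∧ wlist w = z := by
    rintro _ ⟨w, ⟨e, he⟩, rfl⟩
    exact ⟨e, w, he, rfl⟩
  choose! idx w hsel hw using hidx
  refine smallWeight_of_injOn idx (fun z hz z' hz' h => ?_) fun z hz => ?_
  · have : w z = w z' := Option.some_inj.1 ((hsel z hz).symm.trans (h ▸ hsel z' hz'))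
    rw [← hw z hz, ← hw z' hz', this]
  · simpa [hw z hz] using le_length_of_select_longFor (hsel z hz)

theorem infinite_compl_upwardClosure {Z : Set Word} (hZ : SmallWeight (wlist '' Z)) :
    {u : Word | ∃ z ∈ Z, Subword z u}ᶜ.Infinite := by
  have : ∀ n : ℕ, ∃ u : Word, (wlist u).length = n + 1 ∧ ∀ z ∈ Z, ¬ Subword z u := by
    intro n
    obtain ⟨_ | ⟨b, t⟩, hlen, hav⟩ := hZ.exists_avoids (n + 1)
    · simp at hlen
    · exact ⟨(b, t), hlen, fun z hz hsub => hav _ ⟨z, hz, rfl⟩ (subword_iff_infix.1 hsub)⟩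
  choose u hlen hav using this
  refine Set.infinite_of_injective_forall_mem (f := u) (fun m n h => ?_) fun n ⟨z, hz, hsub⟩ =>
    hav n z hz hsub
  have := hlen m
  rw [h, hlen n] at this
  omega

end Words

theorem darkW_uniRel {X : Set Word} (hX : Xᶜ.Infinite)
    (hmeet : ∀ Y : Set Word, REPred (· ∈ Y) → Y.Infinite → (Y ∩ X).Nonempty) :
    DarkW (uniRel X) := by
  refine ⟨?_, fun T hT htr => ?_⟩
  · have hclass : ∀ u ∈ Xᶜ, {v | uniRel X u v} = {u} := fun u hu => Set.ext fun v =>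
      ⟨fun h => h.elim Eq.symm fun h' => absurd h'.1 hu, fun h => Or.inl (Eq.symm h)⟩
    refine ((hX.image Set.singleton_injective.injOn).mono ?_)
    rintro _ ⟨u, hu, rfl⟩
    exact ⟨u, (hclass u hu).symm⟩
  by_contra hinf
  obtain ⟨t, htT, htX⟩ := hmeet T hT hinf
  have hne : ComputablePred fun a : Word => a ≠ t :=
    (PrimrecPred.not (Primrec.eq.comp Primrec.id (Primrec.const t))).computablePred
  obtain ⟨t', ⟨ht'T, ht't⟩, ht'X⟩ :=
    hmeet {a | a ∈ T ∧ a ≠ t} (hT.and_computablePred hne)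
      (Set.Infinite.sdiff hinf (Set.finite_singleton t))
  exact htr t htT t' ht'T (Ne.symm ht't) (Or.inr ⟨htX, ht'X⟩)

/-- there is a simple set Z of words with at most k words of
length ≤ k+4 for each k; its upward closure Z̄ (under the subword relation) is
coinfinite, and the unidimensional ceer R_{Z̄} is dark. -/
theorem exists_simple_set_with_dark_upward_closure :
    ∃ Z : Set Word, SimpleSetW Z ∧
      (∀ k : ℕ, {u ∈ Z | (wlist u).length ≤ k + 4}.Finite ∧
        {u ∈ Z | (wlist u).length ≤ k + 4}.ncard ≤ k) ∧
      ({u : Word | ∃ z ∈ Z, Subword z u}ᶜ.Infinite ∧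
        DarkW (uniRel {u : Word | ∃ z ∈ Z, Subword z u})) := by
  have hcompl := infinite_compl_upwardClosure smallWeight_postWords
  have hsub : postWords ⊆ {u | ∃ z ∈ postWords, Subword z u} :=
    fun z hz => ⟨z, hz, [], [], by simp⟩
  refine ⟨postWords, ⟨postWords_re, hcompl.mono (Set.compl_subset_compl.2 hsub),
    fun Y hY => postWords_inter_nonempty hY⟩, postWords_length_le_finite_and_ncard_le, hcompl,
    darkW_uniRel hcompl fun Y hY hinf => ?_⟩
  exact (postWords_inter_nonempty hY hinf).mono (Set.inter_subset_inter_right _ hsub)
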